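/- arXiv:2210.02557 — 7 statements merged into one kernel-verified Lean document; each statement's English description precedes it below -/
import Mathlib

section
/- Let N ≥ 2 channels have rates r_i > 0 and availability probabilities p_i ∈ (0,1], let Δ > 0, and suppose channel i* uniquely maximizes throughput: r_{i*} p_{i*} > r_j p_j for all j ≠ i*. Let h = argmax_{j ≠ i*} r_j p_j and define the threshold H = ( Δ·(1−p_{i*})/p_{i*} ) / ( 1/(r_h p_h) − 1/(r_{i*} p_{i*}) ). Then for every file size F ≥ H and every channel j, E[T(i*,F)] ≤ E[T(j,F)]; that is, the max-throughput channel is static optimal for all F ≥ H. -/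
/-! Writing `x = F/(Δ r)` for the number of slots needed at full availability, the expected
time is squeezed between the fluid time `F/(r p) = Δ x / p` and that time plus one extra expected
wait `Δ(1-p)/p`. Above the threshold the fluid-time gap between `i⋆` and any other channel, which
is at least the gap to the runner-up `h`, already exceeds this extra wait. -/

/-- Expected static transfer time of a file of size `F` over a Bernoulli channel with
rate `r`, availability probability `p`, and slot duration `Δ`:
`E[T] = Δ(k/p + 1{α>0}(1-p)/p + α)` where `k = ⌊F/(Δr)⌋` and `α = F/(Δr) - k`. -/
noncomputable def ET (Δ r p F : ℝ) : ℝ :=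
  Δ * ((⌊F / (Δ * r)⌋₊ : ℝ) / p
    + (if 0 < F / (Δ * r) - (⌊F / (Δ * r)⌋₊ : ℝ) then (1 - p) / p else 0)
    + (F / (Δ * r) - (⌊F / (Δ * r)⌋₊ : ℝ)))

section SlotBounds

variable {p x : ℝ}

lemma div_le_floor_div_add_ite (hp : 0 < p) (hp1 : p ≤ 1) (hx : 0 ≤ x) :
    x / p ≤ (⌊x⌋₊ : ℝ) / p + (if 0 < x - (⌊x⌋₊ : ℝ) then (1 - p) / p else 0)
      + (x - (⌊x⌋₊ : ℝ)) := by
  have hk : (⌊x⌋₊ : ℝ) ≤ x := Nat.floor_le hx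
  have hk1 : x < ⌊x⌋₊ + 1 := Nat.lt_floor_add_one x
  split_ifs with hfrac
  · have hgap : (⌊x⌋₊ : ℝ) / p + (1 - p) / p + (x - ⌊x⌋₊) - x / p
        = (1 - p) * (⌊x⌋₊ + 1 - x) / p := by field_simp; ring
    have : 0 ≤ (1 - p) * (⌊x⌋₊ + 1 - x) / p :=
      div_nonneg (mul_nonneg (by linarith) (by linarith)) hp.le
    linarith
  · have hxk : (⌊x⌋₊ : ℝ) = x := le_antisymm hk (by linarith)
    simp [hxk]

lemma floor_div_add_ite_le (hp : 0 < p) (hp1 : p ≤ 1) (hx : 0 ≤ x) :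
    (⌊x⌋₊ : ℝ) / p + (if 0 < x - (⌊x⌋₊ : ℝ) then (1 - p) / p else 0) + (x - (⌊x⌋₊ : ℝ))
      ≤ x / p + (1 - p) / p := by
  have hk : (⌊x⌋₊ : ℝ) ≤ x := Nat.floor_le hx
  have hgap' : 0 ≤ (1 - p) / p := div_nonneg (by linarith) hp.le
  split_ifs with hfrac
  · have hgap : x / p + (1 - p) / p - ((⌊x⌋₊ : ℝ) / p + (1 - p) / p + (x - ⌊x⌋₊))
        = (1 - p) * (x - ⌊x⌋₊) / p := by field_simp; ring
    have : 0 ≤ (1 - p) * (x - ⌊x⌋₊) / p :=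
      div_nonneg (mul_nonneg (by linarith) hfrac.le) hp.le
    linarith
  · have hxk : (⌊x⌋₊ : ℝ) = x := le_antisymm hk (by linarith)
    simpa [hxk] using hgap'

end SlotBounds

section ExpectedTime

variable {Δ r p F : ℝ}

lemma div_mul_eq_mul_div_div (hΔ : 0 < Δ) (hr : 0 < r) :
    F / (r * p) = Δ * (F / (Δ * r) / p) := by
  field_simp

lemma div_le_ET (hΔ : 0 < Δ) (hr : 0 < r) (hp : 0 < p) (hp1 : p ≤ 1) (hF : 0 ≤ F) :
    F / (r * p) ≤ ET Δ r p F := by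
  rw [div_mul_eq_mul_div_div hΔ hr, ET]
  exact mul_le_mul_of_nonneg_left (div_le_floor_div_add_ite hp hp1 (by positivity)) hΔ.le

lemma ET_le_div_add (hΔ : 0 < Δ) (hr : 0 < r) (hp : 0 < p) (hp1 : p ≤ 1) (hF : 0 ≤ F) :
    ET Δ r p F ≤ F / (r * p) + Δ * (1 - p) / p := by
  rw [div_mul_eq_mul_div_div hΔ hr, ET, mul_div_assoc, ← mul_add]
  exact mul_le_mul_of_nonneg_left (floor_div_add_ite_le hp hp1 (by positivity)) hΔ.le

end ExpectedTime

lemma add_le_div_of_div_sub_le {a b c F : ℝ} (ha : 0 < a) (hab : a < b)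
    (hF : c / (1 / a - 1 / b) ≤ F) : F / b + c ≤ F / a := by
  have hden : 0 < 1 / a - 1 / b := sub_pos.2 (one_div_lt_one_div_of_lt ha hab)
  rw [div_le_iff₀ hden] at hF
  have : F * (1 / a - 1 / b) = F / a - F / b := by ring
  linarith

theorem max_throughput_static_optimal_above_threshold_general
    {N : ℕ} (r p : Fin N → ℝ) (Δ : ℝ) (hΔ : 0 < Δ)
    (hr : ∀ i, 0 < r i) (hp : ∀ i, p i ∈ Set.Ioc (0 : ℝ) 1)
    (istar : Fin N) (hstar : ∀ j, j ≠ istar → r j * p j < r istar * p istar)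
    (h : Fin N) (hh : h ≠ istar) (hmax2 : ∀ j, j ≠ istar → r j * p j ≤ r h * p h) :
    ∀ F : ℝ, 0 < F →
      (Δ * (1 - p istar) / p istar) / (1 / (r h * p h) - 1 / (r istar * p istar)) ≤ F →
      ∀ j : Fin N, ET Δ (r istar) (p istar) F ≤ ET Δ (r j) (p j) F := by
  intro F hF hH j
  rcases eq_or_ne j istar with rfl | hj
  · exact le_rfl
  have hrp : ∀ i, 0 < r i * p i := fun i => mul_pos (hr i) (hp i).1
  calc ET Δ (r istar) (p istar) F
      ≤ F / (r istar * p istar) + Δ * (1 - p istar) / p istar :=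
        ET_le_div_add hΔ (hr istar) (hp istar).1 (hp istar).2 hF.le
    _ ≤ F / (r h * p h) := add_le_div_of_div_sub_le (hrp h) (hstar h hh) hH
    _ ≤ F / (r j * p j) := div_le_div_of_nonneg_left hF.le (hrp j) (hmax2 j hj)
    _ ≤ ET Δ (r j) (p j) F := div_le_ET hΔ (hr j) (hp j).1 (hp j).2 hF.le

/-- If channel `i⋆` uniquely maximizes throughput and `h` is the channel with the
second largest throughput, then for every file size
`F ≥ H = (Δ(1-p_{i⋆})/p_{i⋆}) / (1/(r_h p_h) - 1/(r_{i⋆} p_{i⋆}))`, the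
max-throughput channel is static optimal: `E[T(i⋆,F)] ≤ E[T(j,F)]` for all `j`. -/
theorem max_throughput_static_optimal_above_threshold
    {N : ℕ} (hN : 2 ≤ N) (r p : Fin N → ℝ) (Δ : ℝ) (hΔ : 0 < Δ)
    (hr : ∀ i, 0 < r i) (hp : ∀ i, p i ∈ Set.Ioc (0 : ℝ) 1)
    (istar : Fin N) (hstar : ∀ j, j ≠ istar → r j * p j < r istar * p istar)
    (h : Fin N) (hh : h ≠ istar) (hmax2 : ∀ j, j ≠ istar → r j * p j ≤ r h * p h) :
    ∀ F : ℝ, 0 < F →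
      (Δ * (1 - p istar) / p istar) / (1 / (r h * p h) - 1 / (r istar * p istar)) ≤ F →
      ∀ j : Fin N, ET Δ (r istar) (p istar) F ≤ ET Δ (r j) (p j) F :=
  max_throughput_static_optimal_above_threshold_general r p Δ hΔ hr hp istar hstar h hh hmax2
end

section
/- Let N ≥ 2 channels have rates r_i > 0 and availability probabilities p_i ∈ (0,1], let Δ > 0, and suppose channel i* uniquely maximizes throughput (r_{i*} p_{i*} > r_j p_j for all j ≠ i*) with p_{i*} < 1. Set m_i = p_i/p_{i*} for i ≠ i*, and let E[T(i_so,F)] = min_j E[T(j,F)]. Then for any file size F with kΔr_{i*} < F < (k+1)Δr_{i*} for some k ∈ ℕ, E[T(i_so,F)]/E[T(i*,F)] ≤ min_{i ≠ i*} min{ 1, ( F/(Δ r_i p_i) + (1−p_i)/p_i ) / ( (k+1)(m_i/p_i − 1) ) }. -/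
theorem ET_eq_of_floor_lt {Δ r p F : ℝ} (hp : p ≠ 0)
    (h : (⌊F / (Δ * r)⌋₊ : ℝ) < F / (Δ * r)) :
    ET Δ r p F = Δ * ((⌊F / (Δ * r)⌋₊ + 1) * (1 / p - 1) + F / (Δ * r)) := by
  rw [ET, if_pos (sub_pos.2 h)]
  field_simp
  ring

theorem ET_eq_of_mem_Ioo {Δ r p F : ℝ} {k : ℕ} (hΔ : 0 < Δ) (hr : 0 < r) (hp : p ≠ 0)
    (hlb : (k : ℝ) * Δ * r < F) (hub : F < ((k : ℝ) + 1) * Δ * r) :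
    ET Δ r p F = Δ * (((k : ℝ) + 1) * (1 / p - 1) + F / (Δ * r)) := by
  have hk : (k : ℝ) < F / (Δ * r) := by rw [lt_div_iff₀ (by positivity)]; linarith
  have hk1 : F / (Δ * r) < (k : ℝ) + 1 := by rw [div_lt_iff₀ (by positivity)]; linarith
  have hfloor : ⌊F / (Δ * r)⌋₊ = k :=
    (Nat.floor_eq_iff ((Nat.cast_nonneg k).trans hk.le)).2 ⟨hk.le, hk1⟩
  rw [ET_eq_of_floor_lt hp (by rwa [hfloor]), hfloor]

theorem ET_le {Δ r p F : ℝ} (hΔ : 0 ≤ Δ) (hx : 0 ≤ F / (Δ * r)) (hp0 : 0 < p) (hp1 : p ≤ 1) :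
    ET Δ r p F ≤ Δ * (F / (Δ * r * p) + (1 - p) / p) := by
  rw [← div_div F (Δ * r) p, ET]
  refine mul_le_mul_of_nonneg_left ?_ hΔ
  set x := F / (Δ * r)
  set n : ℝ := (⌊x⌋₊ : ℝ)
  have hfrac : 0 ≤ x - n := sub_nonneg.2 (Nat.floor_le hx)
  have hind : (if 0 < x - n then (1 - p) / p else 0) ≤ (1 - p) / p := by
    split_ifs
    exacts [le_rfl, div_nonneg (sub_nonneg.2 hp1) hp0.le]
  calc n / p + (if 0 < x - n then (1 - p) / p else 0) + (x - n)
      ≤ n / p + (1 - p) / p + (x - n) / p := by linarith [le_div_self hfrac hp0 hp1]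
    _ = x / p + (1 - p) / p := by ring

theorem static_optimal_vs_max_throughput_ratio_general
    {N : ℕ} (hN : 2 ≤ N) (r p : Fin N → ℝ) (Δ : ℝ) (hΔ : 0 < Δ)
    (hr : ∀ i, 0 < r i) (hp : ∀ i, p i ∈ Set.Ioc (0 : ℝ) 1)
    (istar : Fin N)
    (hpstar : p istar < 1)
    (F : ℝ) (k : ℕ) (hFlb : (k : ℝ) * Δ * r istar < F)
    (hFub : F < ((k : ℝ) + 1) * Δ * r istar) :
    (⨅ j : Fin N, ET Δ (r j) (p j) F) / ET Δ (r istar) (p istar) F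
      ≤ ⨅ i : {j : Fin N // j ≠ istar},
          min 1 ((F / (Δ * r i * p i) + (1 - p i) / p i)
            / (((k : ℝ) + 1) * ((p i / p istar) / p i - 1))) := by
  have hF : 0 < F := lt_of_le_of_lt (by have := hr istar; positivity) hFlb
  have hgap : 0 < ((k : ℝ) + 1) * (1 / p istar - 1) :=
    mul_pos (by positivity) (sub_pos.2 ((one_lt_div (hp istar).1).2 hpstar))
  have hlower : Δ * (((k : ℝ) + 1) * (1 / p istar - 1)) < ET Δ (r istar) (p istar) F := by
    rw [ET_eq_of_mem_Ioo hΔ (hr istar) (hp istar).1.ne' hFlb hFub]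
    have := hr istar
    exact mul_lt_mul_of_pos_left (lt_add_of_pos_right _ (by positivity)) hΔ
  have hstar_pos : 0 < ET Δ (r istar) (p istar) F := (mul_pos hΔ hgap).trans hlower
  have hinf_le (j : Fin N) : (⨅ j, ET Δ (r j) (p j) F) ≤ ET Δ (r j) (p j) F :=
    ciInf_le (Set.finite_range _).bddBelow j
  have : Nontrivial (Fin N) := Fin.nontrivial_iff_two_le.2 hN
  have : Nonempty {j : Fin N // j ≠ istar} := nonempty_subtype.2 (exists_ne istar)
  refine le_ciInf fun ⟨i, _⟩ => le_min ((div_le_one hstar_pos).2 (hinf_le istar)) ?_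
  obtain ⟨hpi0, hpi1⟩ := hp i
  have hbound_nonneg : 0 ≤ F / (Δ * r i * p i) + (1 - p i) / p i :=
    add_nonneg (by have := hr i; positivity) (div_nonneg (sub_nonneg.2 hpi1) hpi0.le)
  rw [div_div_cancel_left' hpi0.ne', ← one_div]
  calc (⨅ j, ET Δ (r j) (p j) F) / ET Δ (r istar) (p istar) F
      ≤ Δ * (F / (Δ * r i * p i) + (1 - p i) / p i)
          / (Δ * (((k : ℝ) + 1) * (1 / p istar - 1))) :=
        div_le_div₀ (mul_nonneg hΔ.le hbound_nonneg)
          ((hinf_le i).trans (ET_le hΔ.le (by have := hr i; positivity) hpi0 hpi1))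
          (mul_pos hΔ hgap) hlower.le
    _ = _ := mul_div_mul_left _ _ hΔ.ne'

/-- Performance of the static optimal policy against the max-throughput policy:
if `i⋆` uniquely maximizes throughput, `p_{i⋆} < 1`, `m_i = p_i/p_{i⋆}`, and
`kΔr_{i⋆} < F < (k+1)Δr_{i⋆}`, then with `E[T(i_so,F)] = min_j E[T(j,F)]`,
`E[T(i_so,F)]/E[T(i⋆,F)] ≤ min_{i ≠ i⋆} min{1, (F/(Δ r_i p_i) + (1-p_i)/p_i) /
((k+1)(m_i/p_i - 1))}`. -/
theorem static_optimal_vs_max_throughput_ratio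
    {N : ℕ} (hN : 2 ≤ N) (r p : Fin N → ℝ) (Δ : ℝ) (hΔ : 0 < Δ)
    (hr : ∀ i, 0 < r i) (hp : ∀ i, p i ∈ Set.Ioc (0 : ℝ) 1)
    (istar : Fin N) (hstar : ∀ j, j ≠ istar → r j * p j < r istar * p istar)
    (hpstar : p istar < 1)
    (F : ℝ) (k : ℕ) (hFlb : (k : ℝ) * Δ * r istar < F)
    (hFub : F < ((k : ℝ) + 1) * Δ * r istar) :
    (⨅ j : Fin N, ET Δ (r j) (p j) F) / ET Δ (r istar) (p istar) F
      ≤ ⨅ i : {j : Fin N // j ≠ istar},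
          min 1 ((F / (Δ * r i * p i) + (1 - p i) / p i)
            / (((k : ℝ) + 1) * ((p i / p istar) / p i - 1))) :=
  static_optimal_vs_max_throughput_ratio_general hN r p Δ hΔ hr hp istar hpstar F k hFlb hFub
end

section
/- Let N channels have rates r_i > 0 and availability probabilities p_i ∈ (0,1], let Δ > 0, and let i* satisfy r_{i*} p_{i*} ≥ r_j p_j for all j. Then for any file size F > 0 and any dynamic policy π ∈ Π(F) with closed-form expected time E[T(π,F)] = Δ( Σ_{n=1}^{L−1} 1/p_{π(n)} + (1−p_{π(L)})/p_{π(L)} ) + F_L/r_{π(L)}, it holds that E[T(π,F)] ≥ F/(r_{i*} p_{i*}). -/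
/-!
A full slot on channel `i` delivers `Δ rᵢ` units of data at expected cost `Δ / pᵢ`, which is at
least `Δ rᵢ / (r_{i⋆} p_{i⋆})`. In the last slot the remaining size `F_L ≤ Δ r` is delivered at
expected cost `Δ (1 - p) / p + F_L / r ≥ F_L / (r p) ≥ F_L / (r_{i⋆} p_{i⋆})`. Summing over the
slots gives `F / (r_{i⋆} p_{i⋆})`, since the delivered amounts add up to `F`.
-/

/-- A dynamic policy for transferring a file of size `F` over `N` channels with rates
`r` in slots of duration `Δ`: a finite sequence of channel choices `chan 0, …, chan (L-1)`,
one per successful transmission, such that the remaining file size is positive before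
each transmission and the last transmission finishes the file. -/
structure Policy (N : ℕ) (r : Fin N → ℝ) (Δ F : ℝ) where
  L : ℕ
  hL : 0 < L
  chan : ℕ → Fin N
  pos : ∀ n < L, 0 < F - Δ * ∑ m ∈ Finset.range n, r (chan m)
  last : F - Δ * ∑ m ∈ Finset.range (L - 1), r (chan m) ≤ Δ * r (chan (L - 1))

/-- Closed-form expected transfer time of a dynamic policy `π`:
`E[T(π,F)] = Δ(∑_{n=1}^{L-1} 1/p_{π(n)} + (1 - p_{π(L)})/p_{π(L)}) + F_L/r_{π(L)}`. -/
noncomputable def ETdyn {N : ℕ} {r : Fin N → ℝ} {Δ F : ℝ} (p : Fin N → ℝ)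
    (π : Policy N r Δ F) : ℝ :=
  Δ * ((∑ n ∈ Finset.range (π.L - 1), 1 / p (π.chan n))
      + (1 - p (π.chan (π.L - 1))) / p (π.chan (π.L - 1)))
    + (F - Δ * ∑ m ∈ Finset.range (π.L - 1), r (π.chan m)) / r (π.chan (π.L - 1))

lemma div_le_one_div_of_mul_le {a p c : ℝ} (hp : 0 < p) (hc : 0 < c) (h : a * p ≤ c) :
    a / c ≤ 1 / p := by
  rwa [div_le_div_iff₀ hc hp, one_mul]

lemma div_le_mul_one_sub_div_add_div {Δ x r p c : ℝ} (hx : 0 ≤ x) (hxr : x ≤ Δ * r)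
    (hr : 0 < r) (hp : 0 < p) (hp1 : p ≤ 1) (hrp : r * p ≤ c) :
    x / c ≤ Δ * ((1 - p) / p) + x / r := by
  have hrp_pos : 0 < r * p := mul_pos hr hp
  have gap : Δ * ((1 - p) / p) + x / r - x / (r * p) = (Δ * r - x) * (1 - p) / (r * p) := by
    field_simp
    ring
  have gap_nonneg : 0 ≤ (Δ * r - x) * (1 - p) / (r * p) :=
    div_nonneg (mul_nonneg (by linarith) (by linarith)) hrp_pos.le
  have slower := div_le_div_of_nonneg_left hx hrp_pos hrp
  linarith

theorem dynamic_policy_lower_bound_general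
    {N : ℕ} (r p : Fin N → ℝ) (Δ F : ℝ) (hΔ : 0 < Δ)
    (hr : ∀ i, 0 < r i) (hp : ∀ i, p i ∈ Set.Ioc (0 : ℝ) 1)
    (istar : Fin N) (hstar : ∀ j, r j * p j ≤ r istar * p istar)
    (π : Policy N r Δ F) :
    F / (r istar * p istar) ≤ ETdyn p π := by
  set c := r istar * p istar
  have hc : 0 < c := mul_pos (hr istar) (hp istar).1
  set S := ∑ m ∈ Finset.range (π.L - 1), r (π.chan m)
  have full_slots : S / c ≤ ∑ n ∈ Finset.range (π.L - 1), 1 / p (π.chan n) := by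
    rw [Finset.sum_div]
    exact Finset.sum_le_sum fun n _ => div_le_one_div_of_mul_le (hp _).1 hc (hstar _)
  have last_slot := div_le_mul_one_sub_div_add_div (π.pos (π.L - 1) (Nat.sub_lt π.hL one_pos)).le
    π.last (hr _) (hp _).1 (hp _).2 (hstar (π.chan (π.L - 1)))
  have full_slots_cost := mul_le_mul_of_nonneg_left full_slots hΔ.le
  have split : F / c = Δ * (S / c) + (F - Δ * S) / c := by ring
  rw [ETdyn, split]
  linarith

/-- For any file size `F > 0` and any dynamic policy `π ∈ Π(F)`, the expected transfer
time is at least `F/(r_{i⋆} p_{i⋆})`, where `i⋆` is a max-throughput channel. -/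
theorem dynamic_policy_lower_bound
    {N : ℕ} (r p : Fin N → ℝ) (Δ F : ℝ) (hΔ : 0 < Δ) (hF : 0 < F)
    (hr : ∀ i, 0 < r i) (hp : ∀ i, p i ∈ Set.Ioc (0 : ℝ) 1)
    (istar : Fin N) (hstar : ∀ j, r j * p j ≤ r istar * p istar)
    (π : Policy N r Δ F) :
    F / (r istar * p istar) ≤ ETdyn p π :=
  dynamic_policy_lower_bound_general r p Δ F hΔ hr hp istar hstar π
end

section
/- Let N ≥ 2 channels have rates r_i > 0 and availability probabilities p_i ∈ (0,1], let Δ > 0, and suppose channel i* uniquely maximizes throughput (r_{i*} p_{i*} > r_j p_j for all j ≠ i*) with p_{i*} < 1. Set m_i = p_i/p_{i*}, and let F satisfy kΔr_{i*} < F < (k+1)Δr_{i*} for some k ∈ ℕ. With E[T(π*,F)] = min_{π ∈ Π(F)} E[T(π,F)], it holds that E[T(π*,F)] / E[T(i*,F)] ≤ min_{i ≠ i*} min{ 1, ( F/(Δ r_i) + 1 − p_i − k·m_i·(r_{i*}p_{i*} − r_i p_i)/(r_i p_i) ) / ( (k+1)(m_i − p_i) ) }. -/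
/-! The optimal time is at most the cost of any particular policy. The static policy on `i⋆`
gives the bound `1`. For `i ≠ i⋆`, the hybrid policy that spends `k` slots on `i⋆` and then
finishes on `i` costs at most `Δ (k/p⋆ + (1 - pᵢ)/pᵢ) + (F - kΔr⋆)/(rᵢ pᵢ)`, since the
leftover `F - kΔr⋆` is served at throughput at least `rᵢ pᵢ`; dividing by
`E[T(i⋆,F)] ≥ Δ (k+1)(1 - p⋆)/p⋆` gives the second bound. -/

theorem Finset.sum_range_ite_lt {M : Type*} [AddCommMonoid M] (n k : ℕ) (x y : M) :
    ∑ m ∈ Finset.range n, (if m < k then x else y) = min n k • x + (n - k) • y := by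
  induction n with
  | zero => simp
  | succ n ih =>
    rw [Finset.sum_range_succ, ih]
    rcases lt_or_ge n k with h | h
    · rw [if_pos h, min_eq_left h.le, min_eq_left h, Nat.sub_eq_zero_of_le h.le,
        Nat.sub_eq_zero_of_le h, succ_nsmul]
      abel
    · rw [if_neg h.not_gt, min_eq_right h, min_eq_right (h.trans n.le_succ), Nat.succ_sub h,
        succ_nsmul]
      abel

theorem exists_nat_mul_lt_le_succ_mul {K : Type*} [Field K] [LinearOrder K]
    [IsStrictOrderedRing K] [FloorSemiring K] {x c : K} (hx : 0 < x) (hc : 0 < c) :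
    ∃ t : ℕ, t * c < x ∧ x ≤ (t + 1) * c := by
  have hceil : 0 < ⌈x / c⌉₊ := Nat.ceil_pos.mpr (div_pos hx hc)
  refine ⟨⌈x / c⌉₊ - 1, ?_, ?_⟩
  · rw [← lt_div_iff₀ hc, ← Nat.lt_ceil]
    omega
  · rw [← div_le_iff₀ hc, Nat.cast_sub hceil, Nat.cast_one, sub_add_cancel]
    exact Nat.le_ceil _

theorem ET_eq_of_lt_of_lt {Δ r p F : ℝ} {k : ℕ} (hΔ : 0 < Δ) (hr : 0 < r)
    (hlo : k * Δ * r < F) (hhi : F < (k + 1) * Δ * r) :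
    ET Δ r p F = Δ * (k / p + (1 - p) / p) + (F - k * Δ * r) / r := by
  have hΔr : 0 < Δ * r := mul_pos hΔ hr
  have hF : 0 ≤ F := by nlinarith [mul_nonneg (Nat.cast_nonneg (α := ℝ) k) hΔr.le]
  have hfloor : ⌊F / (Δ * r)⌋₊ = k := by
    rw [Nat.floor_eq_iff (div_nonneg hF hΔr.le), le_div_iff₀ hΔr, div_lt_iff₀ hΔr]
    constructor <;> linarith
  have hfrac : F / (Δ * r) - k = (F - k * Δ * r) / (Δ * r) := by
    field_simp
  have hfrac_pos : 0 < F / (Δ * r) - k := by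
    rw [hfrac]; exact div_pos (by linarith) hΔr
  rw [ET, hfloor, if_pos hfrac_pos, hfrac]
  field_simp

namespace Policy

variable {N : ℕ} {r : Fin N → ℝ} {Δ F : ℝ}

def twoPhase (a b : Fin N) (k t : ℕ) (hΔ : 0 ≤ Δ) (ha : 0 ≤ r a) (hb : 0 ≤ r b)
    (hlo : Δ * (k * r a + t * r b) < F) (hhi : F ≤ Δ * (k * r a + (t + 1) * r b)) :
    Policy N r Δ F where
  L := k + t + 1
  hL := Nat.succ_pos _
  chan n := if n < k then a else b
  pos n hn := by
    simp only [apply_ite r, Finset.sum_range_ite_lt, nsmul_eq_mul]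
    have hmin : ((min n k : ℕ) : ℝ) ≤ k := by exact_mod_cast min_le_right n k
    have hsub : ((n - k : ℕ) : ℝ) ≤ t := by exact_mod_cast (by omega : n - k ≤ t)
    have : Δ * ((min n k : ℕ) * r a + (n - k : ℕ) * r b) ≤ Δ * (k * r a + t * r b) := by
      gcongr
    linarith
  last := by
    simp only [apply_ite r, Finset.sum_range_ite_lt, nsmul_eq_mul, Nat.add_sub_cancel,
      if_neg (by omega : ¬k + t < k), min_eq_right (Nat.le_add_right k t), Nat.add_sub_cancel_left]
    linarith

end Policy

section twoPhase

variable {N : ℕ} {r : Fin N → ℝ} {Δ F : ℝ} {a b : Fin N} {k t : ℕ}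

theorem ETdyn_twoPhase (p : Fin N → ℝ) (hΔ : 0 ≤ Δ) (ha : 0 ≤ r a) (hb : 0 ≤ r b)
    (hlo : Δ * (k * r a + t * r b) < F) (hhi : F ≤ Δ * (k * r a + (t + 1) * r b)) :
    ETdyn p (Policy.twoPhase a b k t hΔ ha hb hlo hhi)
      = Δ * (k / p a + t / p b + (1 - p b) / p b) + (F - Δ * (k * r a + t * r b)) / r b := by
  simp only [ETdyn, Policy.twoPhase, Nat.add_sub_cancel, if_neg (by omega : ¬k + t < k),
    apply_ite r, apply_ite p, apply_ite (fun x : ℝ => 1 / x), Finset.sum_range_ite_lt,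
    nsmul_eq_mul,
    min_eq_right (Nat.le_add_right k t), Nat.add_sub_cancel_left]
  ring

theorem ETdyn_twoPhase_le {p : Fin N → ℝ} (hΔ : 0 ≤ Δ) (ha : 0 ≤ r a) (hb : 0 < r b)
    (hpb : 0 < p b) (hpb1 : p b ≤ 1)
    (hlo : Δ * (k * r a + t * r b) < F) (hhi : F ≤ Δ * (k * r a + (t + 1) * r b)) :
    ETdyn p (Policy.twoPhase a b k t hΔ ha hb.le hlo hhi)
      ≤ Δ * (k / p a + (1 - p b) / p b) + (F - Δ * (k * r a)) / (r b * p b) := by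
  set R := F - Δ * (k * r a + t * r b)
  have hR : R / r b ≤ R / (r b * p b) :=
    div_le_div_of_nonneg_left (by linarith) (by positivity) (mul_le_of_le_one_right hb.le hpb1)
  have hsplit : (F - Δ * (k * r a)) / (r b * p b) = Δ * (t / p b) + R / (r b * p b) := by
    field_simp
    ring
  rw [ETdyn_twoPhase, hsplit]
  linarith

end twoPhase

theorem hybrid_bound_div_static_le {Δ F r₀ p₀ r p : ℝ} {k : ℕ} (hΔ : 0 < Δ) (hr₀ : 0 < r₀)
    (hr : 0 < r) (hp₀ : 0 < p₀) (hp₀1 : p₀ < 1) (hp : 0 < p) (hp1 : p ≤ 1)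
    (hF : k * Δ * r₀ ≤ F) :
    (Δ * (k / p₀ + (1 - p) / p) + (F - Δ * (k * r₀)) / (r * p))
        / (Δ * (k / p₀ + (1 - p₀) / p₀) + (F - k * Δ * r₀) / r₀)
      ≤ (F / (Δ * r) + 1 - p - k * (p / p₀) * ((r₀ * p₀ - r * p) / (r * p)))
        / ((k + 1) * (p / p₀ - p)) := by
  have hnum : 0 ≤ Δ * (k / p₀ + (1 - p) / p) + (F - Δ * (k * r₀)) / (r * p) := by
    have : 0 ≤ F - Δ * (k * r₀) := by linarith
    have : 0 ≤ 1 - p := by linarith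
    positivity
  have hden : 0 < Δ * (k + 1) * (1 - p₀) / p₀ := by
    have : 0 < 1 - p₀ := by linarith
    positivity
  have hstatic_ge :
      Δ * (k + 1) * (1 - p₀) / p₀ ≤ Δ * (k / p₀ + (1 - p₀) / p₀) + (F - k * Δ * r₀) / r₀ := by
    have : 0 ≤ (F - k * Δ * r₀) / r₀ := div_nonneg (by linarith) hr₀.le
    have : Δ * (k + 1) * (1 - p₀) / p₀ = Δ * (k / p₀ + (1 - p₀) / p₀) - Δ * k := by
      field_simp
      ring
    nlinarith [mul_nonneg hΔ.le (Nat.cast_nonneg (α := ℝ) k)]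
  calc _ ≤ (Δ * (k / p₀ + (1 - p) / p) + (F - Δ * (k * r₀)) / (r * p))
        / (Δ * (k + 1) * (1 - p₀) / p₀) := div_le_div_of_nonneg_left hnum hden hstatic_ge
    _ = _ := by
      have : p / p₀ - p ≠ 0 := by
        rw [div_sub' hp₀.ne']
        exact div_ne_zero (by nlinarith) hp₀.ne'
      field_simp
      ring

theorem dynamic_optimal_ratio_upper_bound_general
    {N : ℕ} (hN : 2 ≤ N) (r p : Fin N → ℝ) (Δ : ℝ) (hΔ : 0 < Δ)
    (hr : ∀ i, 0 < r i) (hp : ∀ i, p i ∈ Set.Ioc (0 : ℝ) 1)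
    (istar : Fin N)
    (hpstar : p istar < 1)
    (F : ℝ) (k : ℕ) (hFlb : (k : ℝ) * Δ * r istar < F)
    (hFub : F < ((k : ℝ) + 1) * Δ * r istar)
    (Topt : ℝ)
    (hopt : IsLeast {t : ℝ | ∃ π : Policy N r Δ F, t = ETdyn p π} Topt) :
    Topt / ET Δ (r istar) (p istar) F
      ≤ ⨅ i : {j : Fin N // j ≠ istar},
          min 1 ((F / (Δ * r i) + 1 - p i
              - (k : ℝ) * (p i / p istar) * ((r istar * p istar - r i * p i) / (r i * p i)))
            / (((k : ℝ) + 1) * (p i / p istar - p i))) := by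
  have hopt_le (π : Policy N r Δ F) : Topt ≤ ETdyn p π := hopt.2 ⟨π, rfl⟩
  have hET := ET_eq_of_lt_of_lt (p := p istar) hΔ (hr istar) hFlb hFub
  have hstatic : Topt ≤ ET Δ (r istar) (p istar) F := by
    have := hopt_le (Policy.twoPhase istar istar k 0 hΔ.le (hr istar).le (hr istar).le
      (by push_cast; linarith) (by push_cast; linarith))
    rw [ETdyn_twoPhase] at this
    rw [hET]
    convert this using 1
    push_cast
    ring
  have hET_pos : 0 < ET Δ (r istar) (p istar) F := by
    have := (hp istar).1
    rw [hET]
    exact add_pos_of_nonneg_of_pos (by positivity) (div_pos (by linarith) (hr istar))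
  have : Nonempty {j : Fin N // j ≠ istar} := by
    obtain ⟨j, hj⟩ := Fintype.exists_ne_of_one_lt_card (by rw [Fintype.card_fin]; omega) istar
    exact ⟨⟨j, hj⟩⟩
  refine le_ciInf fun ⟨i, _⟩ => le_min ((div_le_one hET_pos).2 hstatic) ?_
  obtain ⟨t, hlo, hhi⟩ := exists_nat_mul_lt_le_succ_mul (x := F - k * Δ * r istar)
    (by linarith) (mul_pos hΔ (hr i))
  have hhybrid := hopt_le (Policy.twoPhase istar i k t hΔ.le (hr istar).le (hr i).le
    (by linarith) (by linarith))
  calc Topt / ET Δ (r istar) (p istar) F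
      ≤ (Δ * (k / p istar + (1 - p i) / p i) + (F - Δ * (k * r istar)) / (r i * p i))
        / ET Δ (r istar) (p istar) F :=
        div_le_div_of_nonneg_right (hhybrid.trans (ETdyn_twoPhase_le hΔ.le (hr istar).le (hr i)
          (hp i).1 (hp i).2 _ _)) hET_pos.le
    _ ≤ _ := by
      rw [hET]
      exact hybrid_bound_div_static_le hΔ (hr istar) (hr i) (hp istar).1 hpstar (hp i).1 (hp i).2
        hFlb.le

/-- Upper bound on the performance of the dynamic optimal policy relative to the
max-throughput policy: if `i⋆` uniquely maximizes throughput, `p_{i⋆} < 1`,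
`m_i = p_i/p_{i⋆}`, and `kΔr_{i⋆} < F < (k+1)Δr_{i⋆}`, then with
`E[T(π⋆,F)] = min_{π ∈ Π(F)} E[T(π,F)]`,
`E[T(π⋆,F)]/E[T(i⋆,F)] ≤ min_{i ≠ i⋆} min{1,
(F/(Δ r_i) + 1 - p_i - k m_i (r_{i⋆}p_{i⋆} - r_i p_i)/(r_i p_i)) / ((k+1)(m_i - p_i))}`. -/
theorem dynamic_optimal_ratio_upper_bound
    {N : ℕ} (hN : 2 ≤ N) (r p : Fin N → ℝ) (Δ : ℝ) (hΔ : 0 < Δ)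
    (hr : ∀ i, 0 < r i) (hp : ∀ i, p i ∈ Set.Ioc (0 : ℝ) 1)
    (istar : Fin N) (hstar : ∀ j, j ≠ istar → r j * p j < r istar * p istar)
    (hpstar : p istar < 1)
    (F : ℝ) (k : ℕ) (hFlb : (k : ℝ) * Δ * r istar < F)
    (hFub : F < ((k : ℝ) + 1) * Δ * r istar)
    (Topt : ℝ)
    (hopt : IsLeast {t : ℝ | ∃ π : Policy N r Δ F, t = ETdyn p π} Topt) :
    Topt / ET Δ (r istar) (p istar) F
      ≤ ⨅ i : {j : Fin N // j ≠ istar},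
          min 1 ((F / (Δ * r i) + 1 - p i
              - (k : ℝ) * (p i / p istar) * ((r istar * p istar - r i * p i) / (r i * p i)))
            / (((k : ℝ) + 1) * (p i / p istar - p i))) :=
  dynamic_optimal_ratio_upper_bound_general hN r p Δ hΔ hr hp istar hpstar F k hFlb hFub Topt hopt
end

section
/- Let N ≥ 2 channels have rates r_i > 0 and availability probabilities p_i ∈ (0,1], let Δ > 0, and let i* satisfy r_{i*} p_{i*} ≥ r_j p_j for all j. For any file size F > 0 and any integer n with 0 ≤ n ≤ ⌊F/(Δ r_{i*})⌋ and F − nΔr_{i*} > 0, the minimum over Π(F) of the expected transfer time satisfies min_{π ∈ Π(F)} E[T(π,F)] ≤ min_{i ≠ i*} { F/(r_i p_i) + Δ( (1−p_i)/p_i − n·(r_{i*}p_{i*} − r_i p_i)/(r_i p_i p_{i*}) ) }, and this upper bound is nonincreasing in n. -/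
/-! Sending `n` full blocks on `istar` and the rest of the file on a fixed channel `i ≠ istar` is
a policy. If `R ∈ (0, Δ r i]` is what is left for its last slot, its expected time falls short of
the bound by `R (1 - p i) / (r i p i) ≥ 0`. The bound is affine in `n` with slope
`-Δ (r istar p istar - r i p i) / (r i p i p istar) ≤ 0`, since `istar` has maximal throughput. -/

open Finset

theorem exists_nat_mul_lt_le_succ_mul_s10 {a x : ℝ} (ha : 0 < a) (hx : 0 < x) :
    ∃ k : ℕ, k * a < x ∧ x ≤ (k + 1) * a := by
  have hceil : ⌈x / a⌉₊ ≠ 0 := (Nat.ceil_pos.mpr (div_pos hx ha)).ne'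
  obtain ⟨hlt, hle⟩ := (Nat.ceil_eq_iff hceil).mp rfl
  refine ⟨⌈x / a⌉₊ - 1, (lt_div_iff₀ ha).mp hlt, (div_le_iff₀ ha).mp ?_⟩
  rwa [Nat.cast_sub (Nat.one_le_iff_ne_zero.mpr hceil), Nat.cast_one, sub_add_cancel]

theorem sum_range_add_apply_ite_lt {α M : Type*} [AddCommMonoid M] (f : α → M) (a b : α)
    (n k : ℕ) : ∑ m ∈ range (n + k), f (if m < n then a else b) = n • f a + k • f b := by
  rw [sum_range_add]
  congr 1
  · rw [sum_congr rfl fun m hm => by rw [if_pos (mem_range.mp hm)], sum_const, card_range]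
  · rw [sum_congr rfl fun m _ => by rw [if_neg (Nat.not_lt.mpr (Nat.le_add_right n m))],
      sum_const, card_range]

section
variable {N : ℕ} {r : Fin N → ℝ} {Δ F : ℝ}

/-- With nonnegative rates the remaining file size only decreases, so it suffices to check
positivity before the last slot. -/
def Policy.ofLastSlot (hΔ : 0 ≤ Δ) (hr : ∀ i, 0 ≤ r i) (chan : ℕ → Fin N) (L : ℕ)
    (hpos : 0 < F - Δ * ∑ m ∈ range L, r (chan m))
    (hlast : F - Δ * ∑ m ∈ range L, r (chan m) ≤ Δ * r (chan L)) : Policy N r Δ F where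
  L := L + 1
  hL := L.succ_pos
  chan := chan
  pos n hn := by
    have hsum : ∑ m ∈ range n, r (chan m) ≤ ∑ m ∈ range L, r (chan m) :=
      sum_le_sum_of_subset_of_nonneg (range_subset_range.mpr (Nat.lt_succ_iff.mp hn))
        fun m _ _ => hr (chan m)
    nlinarith
  last := by simpa using hlast

theorem ETdyn_ofLastSlot (p : Fin N → ℝ) (hΔ : 0 ≤ Δ) (hr : ∀ i, 0 ≤ r i) (chan : ℕ → Fin N)
    (L : ℕ) (hpos : 0 < F - Δ * ∑ m ∈ range L, r (chan m))
    (hlast : F - Δ * ∑ m ∈ range L, r (chan m) ≤ Δ * r (chan L)) :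
    ETdyn p (Policy.ofLastSlot hΔ hr chan L hpos hlast) =
      Δ * ((∑ m ∈ range L, 1 / p (chan m)) + (1 - p (chan L)) / p (chan L))
        + (F - Δ * ∑ m ∈ range L, r (chan m)) / r (chan L) := by
  simp only [ETdyn, Policy.ofLastSlot, Nat.add_sub_cancel]

end

/-- `n Δ / p istar + (F - n Δ r istar) / (r i p i) + Δ (1 - p i) / p i`: the expected time of `n`
slots on `istar` followed by channel `i`, with the partial last slot on `i` charged at the
full-slot price `1 / p i`. -/
noncomputable def heuristicBound {N : ℕ} (r p : Fin N → ℝ) (Δ F : ℝ) (istar : Fin N) (n : ℕ)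
    (i : Fin N) : ℝ :=
  F / (r i * p i) + Δ * ((1 - p i) / p i
    - (n : ℝ) * ((r istar * p istar - r i * p i) / (r i * p i * p istar)))

section
variable {N : ℕ} {r p : Fin N → ℝ} {Δ F : ℝ} {istar i : Fin N}

theorem heuristicBound_antitone (hΔ : 0 ≤ Δ) (hri : 0 ≤ r i) (hpi : 0 ≤ p i)
    (hpstar : 0 ≤ p istar) (hgain : r i * p i ≤ r istar * p istar) :
    Antitone fun n => heuristicBound r p Δ F istar n i := by
  intro n n' hn
  have hrate : 0 ≤ (r istar * p istar - r i * p i) / (r i * p i * p istar) :=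
    div_nonneg (sub_nonneg.mpr hgain) (by positivity)
  dsimp only [heuristicBound]
  gcongr

theorem exists_policy_ETdyn_le_heuristicBound (hΔ : 0 < Δ) (hr : ∀ j, 0 < r j)
    (hpi : p i ∈ Set.Ioc 0 1) (hpstar : 0 < p istar) {n : ℕ}
    (hn : 0 < F - n * Δ * r istar) :
    ∃ π : Policy N r Δ F, ETdyn p π ≤ heuristicBound r p Δ F istar n i := by
  obtain ⟨k, hk, hk'⟩ := exists_nat_mul_lt_le_succ_mul_s10 (mul_pos hΔ (hr i)) hn
  have hsum : ∀ g : Fin N → ℝ,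
      ∑ m ∈ range (n + k), g (if m < n then istar else i) = n * g istar + k * g i := fun g => by
    simp only [sum_range_add_apply_ite_lt, nsmul_eq_mul]
  have hlastChan : (if n + k < n then istar else i) = i := if_neg (by omega)
  set R := F - Δ * (n * r istar + k * r i) with hR
  have hpos : 0 < F - Δ * ∑ m ∈ range (n + k), r (if m < n then istar else i) := by
    rw [hsum]; linarith
  have hlast : F - Δ * ∑ m ∈ range (n + k), r (if m < n then istar else i)
      ≤ Δ * r (if n + k < n then istar else i) := by
    rw [hsum, hlastChan]; linarith
  refine ⟨Policy.ofLastSlot hΔ.le (fun j => (hr j).le) _ _ hpos hlast, ?_⟩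
  rw [ETdyn_ofLastSlot, hsum r, hsum (fun j => 1 / p j), hlastChan, ← hR, ← sub_nonneg]
  have hri := hr i
  obtain ⟨hpi0, hpi1⟩ := hpi
  have hgap : heuristicBound r p Δ F istar n i
      - (Δ * ((n * (1 / p istar) + k * (1 / p i)) + (1 - p i) / p i) + R / r i)
      = R * (1 - p i) / (r i * p i) := by
    rw [hR, heuristicBound]
    field_simp
    ring
  rw [hgap]
  have hR0 : 0 < R := by rw [hR]; linarith
  have h1pi : 0 ≤ 1 - p i := by linarith
  positivity

end

theorem heuristic_upper_bound_nonincreasing_general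
    {N : ℕ} (hN : 2 ≤ N) (r p : Fin N → ℝ) (Δ : ℝ) (hΔ : 0 < Δ)
    (hr : ∀ i, 0 < r i) (hp : ∀ i, p i ∈ Set.Ioc (0 : ℝ) 1)
    (istar : Fin N) (hstar : ∀ j, r j * p j ≤ r istar * p istar)
    (F : ℝ)
    (Topt : ℝ)
    (hopt : IsLeast {t : ℝ | ∃ π : Policy N r Δ F, t = ETdyn p π} Topt) :
    (∀ n : ℕ, n ≤ ⌊F / (Δ * r istar)⌋₊ → 0 < F - (n : ℝ) * Δ * r istar →
      Topt ≤ ⨅ i : {j : Fin N // j ≠ istar},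
        (F / (r i * p i) + Δ * ((1 - p i) / p i
          - (n : ℝ) * ((r istar * p istar - r i * p i) / (r i * p i * p istar))))) ∧
    (∀ n n' : ℕ, n ≤ ⌊F / (Δ * r istar)⌋₊ → 0 < F - (n : ℝ) * Δ * r istar →
      n' ≤ ⌊F / (Δ * r istar)⌋₊ → 0 < F - (n' : ℝ) * Δ * r istar → n ≤ n' →
      (⨅ i : {j : Fin N // j ≠ istar},
        (F / (r i * p i) + Δ * ((1 - p i) / p i
          - (n' : ℝ) * ((r istar * p istar - r i * p i) / (r i * p i * p istar)))))
      ≤ ⨅ i : {j : Fin N // j ≠ istar},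
        (F / (r i * p i) + Δ * ((1 - p i) / p i
          - (n : ℝ) * ((r istar * p istar - r i * p i) / (r i * p i * p istar))))) := by
  have hp0 : ∀ j, 0 < p j := fun j => (hp j).1
  have : Nontrivial (Fin N) := Fin.nontrivial_iff_two_le.mpr hN
  have : Nonempty {j : Fin N // j ≠ istar} := nonempty_subtype.mpr (exists_ne istar)
  refine ⟨fun n _ hn => le_ciInf fun i => ?_, fun n n' _ _ _ _ hnn => ?_⟩
  · obtain ⟨π, hπ⟩ := exists_policy_ETdyn_le_heuristicBound hΔ hr (hp i) (hp0 istar) hn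
    exact (hopt.2 ⟨π, rfl⟩).trans hπ
  · exact ciInf_mono (Set.finite_range _).bddBelow fun i =>
      heuristicBound_antitone hΔ.le (hr i).le (hp0 i).le (hp0 istar).le (hstar i) hnn

/-- The heuristic upper bound on the minimum expected transfer time: first transmit
`n` full `Δ r_{i⋆}`-sized blocks on the max-throughput channel `i⋆`, then follow a
single static channel `i ≠ i⋆` for the rest.  For any `0 ≤ n ≤ ⌊F/(Δ r_{i⋆})⌋` with
`F - nΔr_{i⋆} > 0`,
`min_{π ∈ Π(F)} E[T(π,F)] ≤ min_{i ≠ i⋆} {F/(r_i p_i) + Δ((1-p_i)/p_i -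
n (r_{i⋆}p_{i⋆} - r_i p_i)/(r_i p_i p_{i⋆}))}`, and this bound is nonincreasing in `n`. -/
theorem heuristic_upper_bound_nonincreasing
    {N : ℕ} (hN : 2 ≤ N) (r p : Fin N → ℝ) (Δ : ℝ) (hΔ : 0 < Δ)
    (hr : ∀ i, 0 < r i) (hp : ∀ i, p i ∈ Set.Ioc (0 : ℝ) 1)
    (istar : Fin N) (hstar : ∀ j, r j * p j ≤ r istar * p istar)
    (F : ℝ) (hF : 0 < F)
    (Topt : ℝ)
    (hopt : IsLeast {t : ℝ | ∃ π : Policy N r Δ F, t = ETdyn p π} Topt) :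
    (∀ n : ℕ, n ≤ ⌊F / (Δ * r istar)⌋₊ → 0 < F - (n : ℝ) * Δ * r istar →
      Topt ≤ ⨅ i : {j : Fin N // j ≠ istar},
        (F / (r i * p i) + Δ * ((1 - p i) / p i
          - (n : ℝ) * ((r istar * p istar - r i * p i) / (r i * p i * p istar))))) ∧
    (∀ n n' : ℕ, n ≤ ⌊F / (Δ * r istar)⌋₊ → 0 < F - (n : ℝ) * Δ * r istar →
      n' ≤ ⌊F / (Δ * r istar)⌋₊ → 0 < F - (n' : ℝ) * Δ * r istar → n ≤ n' →
      (⨅ i : {j : Fin N // j ≠ istar},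
        (F / (r i * p i) + Δ * ((1 - p i) / p i
          - (n' : ℝ) * ((r istar * p istar - r i * p i) / (r i * p i * p istar)))))
      ≤ ⨅ i : {j : Fin N // j ≠ istar},
        (F / (r i * p i) + Δ * ((1 - p i) / p i
          - (n : ℝ) * ((r istar * p istar - r i * p i) / (r i * p i * p istar))))) :=
  heuristic_upper_bound_nonincreasing_general hN r p Δ hΔ hr hp istar hstar F Topt hopt
end

section
/- Let Δ > 0, r > 0, F > 0, and let the channel be positively correlated: q_1, q_0 ∈ (0,1) with 1 − q_1 − q_0 > 0, starting in the stationary regime c = π = q_1/(q_1 + q_0). Then with k = ⌊F/(Δr)⌋ and α = F/(Δr) − k, the expected transfer time E[T] = Δ( (k + 1{α>0} − 1)·q_0/q_1 + (1−π)/q_1 ) + F/r satisfies E[T] > F/(r·π) strictly, for every F > 0 (in particular even when F is an integer multiple of Δr). -/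
/-! With `x = F/(Δr)` and `s = q₁ + q₀`, both sides differ by
`Δ q₀/q₁ · (k + 1{α>0} - x + (1/s - 1))`. Rounding up the number of slots gives
`k + 1{α>0} ≥ x`, and positive correlation means `s < 1`, so the bracket is positive. -/

theorem le_natFloor_add_ite_pos (x : ℝ) :
    x ≤ ⌊x⌋₊ + if 0 < x - ⌊x⌋₊ then 1 else 0 := by
  have := Nat.lt_floor_add_one x
  split_ifs with h <;> linarith

theorem transferTime_sub_throughputTime (Δ r F q₁ q₀ n : ℝ) (hΔ : Δ ≠ 0) (hr : r ≠ 0)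
    (hq₁ : q₁ ≠ 0) (hs : q₁ + q₀ ≠ 0) :
    Δ * ((n - 1) * q₀ / q₁ + (1 - q₁ / (q₁ + q₀)) / q₁) + F / r
        - F / (r * (q₁ / (q₁ + q₀)))
      = Δ * q₀ / q₁ * (n - F / (Δ * r) + ((q₁ + q₀)⁻¹ - 1)) := by
  field_simp
  ring

theorem positively_correlated_markovian_strict_lower_bound_general
    (Δ r F q₁ q₀ : ℝ) (hΔ : 0 < Δ) (hr : 0 < r)
    (hq₁ : q₁ ∈ Set.Ioo (0 : ℝ) 1) (hq₀ : q₀ ∈ Set.Ioo (0 : ℝ) 1)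
    (hcorr : 0 < 1 - q₁ - q₀)
    (k : ℕ) (α : ℝ) (hk : k = ⌊F / (Δ * r)⌋₊) (hα : α = F / (Δ * r) - k) :
    F / (r * (q₁ / (q₁ + q₀)))
      < Δ * (((k : ℝ) + (if 0 < α then 1 else 0) - 1) * q₀ / q₁
          + (1 - q₁ / (q₁ + q₀)) / q₁) + F / r := by
  subst hk hα
  obtain ⟨hq₁, -⟩ := hq₁
  obtain ⟨hq₀, -⟩ := hq₀
  have hs : 0 < q₁ + q₀ := by linarith
  have hslots := le_natFloor_add_ite_pos (F / (Δ * r))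
  have hinv : 1 < (q₁ + q₀)⁻¹ := (one_lt_inv₀ hs).2 (by linarith)
  rw [← sub_pos, transferTime_sub_throughputTime Δ r F q₁ q₀ _
    hΔ.ne' hr.ne' hq₁.ne' hs.ne']
  exact mul_pos (by positivity) (by linarith)

/-- For a positively correlated two-state Markovian channel (`q₁, q₀ ∈ (0,1)` with
`1 - q₁ - q₀ > 0`) starting in its stationary regime `c = π = q₁/(q₁+q₀)`, the
expected static transfer time
`E[T] = Δ((k + 1{α>0} - 1)q₀/q₁ + (1-π)/q₁) + F/r` strictly exceeds `F/(rπ)` for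
every file size `F > 0` (in particular even when `F` is an integer multiple of `Δr`),
where `k = ⌊F/(Δr)⌋` and `α = F/(Δr) - k`. -/
theorem positively_correlated_markovian_strict_lower_bound
    (Δ r F q₁ q₀ : ℝ) (hΔ : 0 < Δ) (hr : 0 < r) (hF : 0 < F)
    (hq₁ : q₁ ∈ Set.Ioo (0 : ℝ) 1) (hq₀ : q₀ ∈ Set.Ioo (0 : ℝ) 1)
    (hcorr : 0 < 1 - q₁ - q₀)
    (k : ℕ) (α : ℝ) (hk : k = ⌊F / (Δ * r)⌋₊) (hα : α = F / (Δ * r) - k) :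
    F / (r * (q₁ / (q₁ + q₀)))
      < Δ * (((k : ℝ) + (if 0 < α then 1 else 0) - 1) * q₀ / q₁
          + (1 - q₁ / (q₁ + q₀)) / q₁) + F / r :=
  positively_correlated_markovian_strict_lower_bound_general Δ r F q₁ q₀ hΔ hr hq₁ hq₀ hcorr k α hk
    hα
end

section
/- Let Δ > 0, F > 0, and consider two Markovian channels i and j with the same rate r > 0 and the same initial availability probability c ∈ [0,1), whose transition probabilities satisfy q_{i,1} = β·q_{j,1} and q_{i,0} = β·q_{j,0} for some β ∈ (0,1), with q_{j,1} ∈ (0,1] and q_{j,0} ∈ [0,1] (so the two channels have equal stationary availability and equal throughput but channel i has larger correlation). Then the difference of expected transfer times equals E[T(i,F)] − E[T(j,F)] = Δ(1−c)( 1/q_{i,1} − 1/q_{j,1} ) > 0; i.e., larger correlation strictly increases the expected file transfer time. -/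
/-!
Scaling both transition probabilities by `β` leaves the ratio `q₀ / q₁` unchanged, so the
two expected transfer times differ only in the waiting term `Δ (1 - c) / q₁` for the first
available slot; since `β q₁ < q₁`, that wait is strictly longer for the more correlated channel.
-/

lemma transferTime_sub_of_scaled_transitions (Δ m c T β q₁ q₀ : ℝ) (hβ : β ≠ 0) :
    (Δ * (m * (β * q₀) / (β * q₁) + (1 - c) / (β * q₁)) + T)
      - (Δ * (m * q₀ / q₁ + (1 - c) / q₁) + T)
      = Δ * (1 - c) * (1 / (β * q₁) - 1 / q₁) := by
  rw [mul_left_comm m β q₀, mul_div_mul_left _ _ hβ]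
  ring

lemma one_div_sub_one_div_pos_of_scaled {β q : ℝ} (hβ₀ : 0 < β) (hβ₁ : β < 1) (hq : 0 < q) :
    0 < 1 / (β * q) - 1 / q := by
  have hβq : β * q < q := mul_lt_of_lt_one_left hq hβ₁
  exact sub_pos.2 (one_div_lt_one_div_of_lt (by positivity) hβq)

theorem larger_correlation_increases_transfer_time_general
    (Δ r F c β qj₁ qj₀ qi₁ qi₀ : ℝ) (hΔ : 0 < Δ)
    (hc : c ∈ Set.Ico (0 : ℝ) 1) (hβ : β ∈ Set.Ioo (0 : ℝ) 1)
    (hqj₁ : qj₁ ∈ Set.Ioc (0 : ℝ) 1)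
    (hqi₁ : qi₁ = β * qj₁) (hqi₀ : qi₀ = β * qj₀)
    (k : ℕ) (α : ℝ) :
    (Δ * (((k : ℝ) + (if 0 < α then 1 else 0) - 1) * qi₀ / qi₁ + (1 - c) / qi₁) + F / r)
      - (Δ * (((k : ℝ) + (if 0 < α then 1 else 0) - 1) * qj₀ / qj₁ + (1 - c) / qj₁) + F / r)
      = Δ * (1 - c) * (1 / qi₁ - 1 / qj₁) ∧
    0 < Δ * (1 - c) * (1 / qi₁ - 1 / qj₁) := by
  obtain ⟨hβ₀, hβ₁⟩ := hβ
  subst hqi₁ hqi₀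
  have hc₁ : 0 < 1 - c := sub_pos.2 hc.2
  exact ⟨transferTime_sub_of_scaled_transitions _ _ _ _ _ _ _ hβ₀.ne',
    mul_pos (mul_pos hΔ hc₁) (one_div_sub_one_div_pos_of_scaled hβ₀ hβ₁ hqj₁.1)⟩

/-- Effect of correlation on the expected file transfer time: two Markovian channels
`i` and `j` with the same rate `r`, the same initial availability `c`, and transition
probabilities related by `q_{i,1} = β q_{j,1}`, `q_{i,0} = β q_{j,0}` with `β ∈ (0,1)`
(hence the same stationary availability and throughput, but channel `i` more
correlated) satisfy
`E[T(i,F)] - E[T(j,F)] = Δ(1-c)(1/q_{i,1} - 1/q_{j,1}) > 0`, where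
`E[T] = Δ((k + 1{α>0} - 1)q₀/q₁ + (1-c)/q₁) + F/r` with `k = ⌊F/(Δr)⌋`,
`α = F/(Δr) - k`. -/
theorem larger_correlation_increases_transfer_time
    (Δ r F c β qj₁ qj₀ qi₁ qi₀ : ℝ) (hΔ : 0 < Δ) (hr : 0 < r) (hF : 0 < F)
    (hc : c ∈ Set.Ico (0 : ℝ) 1) (hβ : β ∈ Set.Ioo (0 : ℝ) 1)
    (hqj₁ : qj₁ ∈ Set.Ioc (0 : ℝ) 1) (hqj₀ : qj₀ ∈ Set.Icc (0 : ℝ) 1)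
    (hqi₁ : qi₁ = β * qj₁) (hqi₀ : qi₀ = β * qj₀)
    (k : ℕ) (α : ℝ) (hk : k = ⌊F / (Δ * r)⌋₊) (hα : α = F / (Δ * r) - k) :
    (Δ * (((k : ℝ) + (if 0 < α then 1 else 0) - 1) * qi₀ / qi₁ + (1 - c) / qi₁) + F / r)
      - (Δ * (((k : ℝ) + (if 0 < α then 1 else 0) - 1) * qj₀ / qj₁ + (1 - c) / qj₁) + F / r)
      = Δ * (1 - c) * (1 / qi₁ - 1 / qj₁) ∧
    0 < Δ * (1 - c) * (1 / qi₁ - 1 / qj₁) :=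
  larger_correlation_increases_transfer_time_general Δ r F c β qj₁ qj₀ qi₁ qi₀ hΔ hc hβ hqj₁ hqi₁
    hqi₀ k α
end
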